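/- arXiv:1711.03466 — 5 statements merged into one kernel-verified Lean document; each statement's English description precedes it below -/
import Mathlib

section
/- For α < 2, if s is a strong equilibrium of the network creation game, then the complement of G(s) contains no cycle, i.e., it is a forest. Equivalently: if the complement of G(s) contains a cycle of length k ≥ 3, then the coalition of players on that cycle can deviate (each buying one additional edge to the next player on the cycle) and strictly decrease each of their costs. -/
open SimpleGraph ENNReal Finset

/-- A strategy profile: each player chooses a set of other players. -/
abbrev Profile (n : ℕ) := Fin n → Finset (Fin n)

/-- Validity: no player buys an edge to herself. -/
def Valid {n : ℕ} (s : Profile n) : Prop := ∀ i, i ∉ s i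

/-- The graph formed by a strategy profile: `{i,j}` is an edge iff `j ∈ s i` or `i ∈ s j`. -/
def NCGraph {n : ℕ} (s : Profile n) : SimpleGraph (Fin n) :=
  SimpleGraph.fromRel (fun i j => j ∈ s i)

instance {n : ℕ} (s : Profile n) : DecidableRel (NCGraph s).Adj := fun i j =>
  decidable_of_iff (i ≠ j ∧ (j ∈ s i ∨ i ∈ s j))
    (SimpleGraph.fromRel_adj (fun a b => b ∈ s a) i j).symm

/-- Distance cost of player `i`: sum of (extended) distances to all players. -/
noncomputable def dCost {n : ℕ} (s : Profile n) (i : Fin n) : ℝ≥0∞ :=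
  ∑ j, ((NCGraph s).edist i j : ℝ≥0∞)

/-- Total cost of player `i` in the network creation game with parameter `α`. -/
noncomputable def cost {n : ℕ} (α : ℝ) (s : Profile n) (i : Fin n) : ℝ≥0∞ :=
  ENNReal.ofReal α * (s i).card + dCost s i

/-- Social cost: sum of all players' costs. -/
noncomputable def socialCost {n : ℕ} (α : ℝ) (s : Profile n) : ℝ≥0∞ :=
  ∑ i, cost α s i

/-- A profile is rational if no edge is bought by both of its endpoints. -/
def Rational {n : ℕ} (s : Profile n) : Prop := ∀ i j, j ∈ s i → i ∉ s j

/-- Pure Nash equilibrium. -/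
def IsNashEq {n : ℕ} (α : ℝ) (s : Profile n) : Prop :=
  ∀ (i : Fin n) (t : Finset (Fin n)), i ∉ t →
    cost α s i ≤ cost α (Function.update s i t) i

/-- Strong equilibrium: no nonempty coalition has a joint deviation strictly
decreasing every member's cost. -/
def IsStrongEq {n : ℕ} (α : ℝ) (s : Profile n) : Prop :=
  ∀ (K : Finset (Fin n)) (s' : Profile n), K.Nonempty → Valid s' →
    (∀ i ∉ K, s' i = s i) → ∃ i ∈ K, cost α s i ≤ cost α s' i

/-- A star graph: one center adjacent to all other vertices, and no other edges. -/
def IsStar {V : Type*} (G : SimpleGraph V) : Prop :=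
  ∃ c : V, ∀ i j : V, G.Adj i j ↔ i ≠ j ∧ (i = c ∨ j = c)

/-! If the complement of `G(s)` contains a cycle, let every player on it buy the edge to her
successor on the cycle. She pays `α < 2` and gets two new neighbours, her successor and her
predecessor, both previously at distance at least `2`, so her cost strictly drops as long as it
was finite. -/

namespace SimpleGraph.Walk

variable {V : Type*} {G : SimpleGraph V} {u : V}

def cycleVert (p : G.Walk u u) (k : ℕ) : V := p.getVert (k % p.length)

variable {p : G.Walk u u}

lemma cycleVert_add_length (k : ℕ) : p.cycleVert (k + p.length) = p.cycleVert k := by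
  simp [cycleVert]

lemma cycleVert_mem_image_range [DecidableEq V] (hL : 0 < p.length) (k : ℕ) :
    p.cycleVert k ∈ (Finset.range p.length).image p.cycleVert :=
  Finset.mem_image.2 ⟨k % p.length, Finset.mem_range.2 (Nat.mod_lt _ hL), by simp [cycleVert]⟩

lemma IsCycle.cycleVert_eq_cycleVert_iff (hp : p.IsCycle) {k m : ℕ} :
    p.cycleVert k = p.cycleVert m ↔ k ≡ m [MOD p.length] := by
  have hL : 0 < p.length := by linarith [hp.three_le_length]
  have := Nat.mod_lt k hL
  have := Nat.mod_lt m hL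
  exact ⟨fun h => hp.getVert_injOn' (by simp only [Set.mem_ofPred_eq]; omega)
    (by simp only [Set.mem_ofPred_eq]; omega) h, fun h => congrArg p.getVert h⟩

lemma IsCycle.adj_cycleVert_succ (hp : p.IsCycle) (k : ℕ) :
    G.Adj (p.cycleVert k) (p.cycleVert (k + 1)) := by
  have hL := hp.three_le_length
  have hk := Nat.mod_lt k (by omega : 0 < p.length)
  have hsucc : (k + 1) % p.length =
      if p.length ≤ k % p.length + 1 then k % p.length + 1 - p.length else k % p.length + 1 := by
    rw [Nat.add_mod_eq_ite, Nat.mod_eq_of_lt (by omega : 1 < p.length)]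
  rw [cycleVert, cycleVert, hsucc]
  split_ifs with h
  · have hend := p.adj_getVert_succ hk
    rw [show k % p.length + 1 = p.length by omega, getVert_length] at hend
    rwa [show k % p.length + 1 - p.length = 0 by omega, getVert_zero]
  · exact p.adj_getVert_succ hk

lemma IsCycle.cycleVert_ne_cycleVert_add_two (hp : p.IsCycle) (k : ℕ) :
    p.cycleVert k ≠ p.cycleVert (k + 2) := by
  rw [Ne, hp.cycleVert_eq_cycleVert_iff]
  intro h
  have h2 : 0 ≡ 2 [MOD p.length] := Nat.ModEq.add_left_cancel' k h
  rw [Nat.ModEq, Nat.zero_mod, Nat.mod_eq_of_lt (by linarith [hp.three_le_length])] at h2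
  omega

lemma IsCycle.exists_map_cycleVert_succ (hp : p.IsCycle) :
    ∃ f : V → V, ∀ k, f (p.cycleVert k) = p.cycleVert (k + 1) := by
  classical
  refine ⟨fun v => if h : ∃ k, p.cycleVert k = v then p.cycleVert (h.choose + 1) else v,
    fun k => ?_⟩
  have h : ∃ m, p.cycleVert m = p.cycleVert k := ⟨k, rfl⟩
  dsimp only
  rw [dif_pos h, hp.cycleVert_eq_cycleVert_iff]
  exact (hp.cycleVert_eq_cycleVert_iff.1 h.choose_spec).add_right 1

theorem IsCycle.exists_cyclic_successor [DecidableEq V] (hp : p.IsCycle) :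
    ∃ (K : Finset V) (f : V → V), K.Nonempty ∧ (∀ i ∈ K, G.Adj i (f i)) ∧
      ∀ i ∈ K, ∃ b ∈ K, f b = i ∧ b ≠ f i := by
  obtain ⟨f, hf⟩ := hp.exists_map_cycleVert_succ
  have hL : 0 < p.length := by linarith [hp.three_le_length]
  refine ⟨(Finset.range p.length).image p.cycleVert, f,
    ⟨_, cycleVert_mem_image_range hL 0⟩, ?_, ?_⟩
  · intro i hi
    obtain ⟨k, -, rfl⟩ := Finset.mem_image.1 hi
    rw [hf]
    exact hp.adj_cycleVert_succ k
  · intro i hi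
    obtain ⟨k, -, rfl⟩ := Finset.mem_image.1 hi
    have hk : p.cycleVert k = p.cycleVert (k + p.length - 1 + 1) := by
      rw [Nat.sub_add_cancel (by omega), cycleVert_add_length]
    refine ⟨p.cycleVert (k + p.length - 1), cycleVert_mem_image_range hL _, ?_, ?_⟩
    · rw [hf, ← hk]
    · rw [hk, hf]
      exact hp.cycleVert_ne_cycleVert_add_two _

end SimpleGraph.Walk

section NetworkCreation

variable {n : ℕ}

lemma ncgraph_adj (s : Profile n) (i j : Fin n) :
    (NCGraph s).Adj i j ↔ i ≠ j ∧ (j ∈ s i ∨ i ∈ s j) :=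
  fromRel_adj _ i j

lemma ncgraph_mono {s t : Profile n} (h : ∀ i, s i ⊆ t i) : NCGraph s ≤ NCGraph t := by
  intro i j hij
  rw [ncgraph_adj] at hij ⊢
  exact ⟨hij.1, hij.2.imp (@h i j) (@h j i)⟩

lemma dCost_ne_top_iff (s : Profile n) (i : Fin n) :
    dCost s i ≠ ⊤ ↔ ∀ j, (NCGraph s).Reachable i j := by
  simp [dCost, ENNReal.sum_eq_top, ← edist_ne_top_iff_reachable]

lemma cost_eq_top_iff (α : ℝ) (s : Profile n) (i : Fin n) :
    cost α s i = ⊤ ↔ ∃ j, ¬(NCGraph s).Reachable i j := by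
  rw [← not_iff_not, not_exists_not, ← dCost_ne_top_iff, cost]
  simp [ENNReal.add_eq_top, ENNReal.mul_eq_top]

def starProfile (c : Fin n) : Profile n := fun i => if i = c then univ.erase c else ∅

lemma valid_starProfile (c : Fin n) : Valid (starProfile c) := by
  intro i
  by_cases hi : i = c <;> simp [starProfile, hi]

lemma reachable_starProfile (c i j : Fin n) : (NCGraph (starProfile c)).Reachable i j := by
  have hc : ∀ i, (NCGraph (starProfile c)).Reachable c i := by
    intro i
    by_cases hi : c = i
    · rw [hi]
    · exact Adj.reachable ((ncgraph_adj _ _ _).2 ⟨hi, Or.inl (by simp [starProfile, Ne.symm hi])⟩)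
  exact (hc i).symm.trans (hc j)

/-- The grand coalition could otherwise deviate to a star, where every cost is finite. -/
lemma IsStrongEq.reachable {α : ℝ} {s : Profile n} (hSE : IsStrongEq α s) (i j : Fin n) :
    (NCGraph s).Reachable i j := by
  by_contra hij
  have htop : ∀ k, cost α s k = ⊤ := fun k => (cost_eq_top_iff α s k).2 <| by
    by_contra! hk
    exact hij ((hk i).symm.trans (hk j))
  obtain ⟨k, -, hk⟩ := hSE univ (starProfile i) ⟨i, mem_univ i⟩ (valid_starProfile i)
    (fun k hk => absurd (mem_univ k) hk)
  rw [htop k, top_le_iff, cost_eq_top_iff] at hk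
  obtain ⟨j, hj⟩ := hk
  exact hj (reachable_starProfile i k j)

lemma two_le_edist_of_not_adj {V : Type*} {G : SimpleGraph V} {u v : V} (hne : u ≠ v)
    (h : ¬G.Adj u v) : (2 : ℝ≥0∞) ≤ G.edist u v := by
  have h1 : 1 < G.edist u v := by
    rw [← not_le, edist_le_one_iff_adj_or_eq]
    tauto
  exact_mod_cast Order.add_one_le_of_lt h1

lemma dCost_add_two_le {s s' : Profile n} (hle : NCGraph s ≤ NCGraph s') {i a b : Fin n}
    (hab : a ≠ b) (ha : ¬(NCGraph s).Adj i a) (ha' : (NCGraph s').Adj i a)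
    (hb : ¬(NCGraph s).Adj i b) (hb' : (NCGraph s').Adj i b) :
    dCost s' i + 2 ≤ dCost s i := by
  classical
  have hnew : ∀ {j}, ¬(NCGraph s).Adj i j → (NCGraph s').Adj i j →
      ((NCGraph s').edist i j : ℝ≥0∞) + 1 ≤ (NCGraph s).edist i j := fun h h' => by
    rw [edist_eq_one_iff_adj.2 h']
    exact le_of_eq_of_le (by norm_num) (two_le_edist_of_not_adj h'.ne h)
  have hrest : ∑ j ∈ {a, b}ᶜ, ((NCGraph s').edist i j : ℝ≥0∞)
      ≤ ∑ j ∈ {a, b}ᶜ, ((NCGraph s).edist i j : ℝ≥0∞) :=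
    sum_le_sum fun j _ => ENat.toENNReal_le.2 (edist_anti hle)
  unfold dCost
  rw [← sum_add_sum_compl {a, b}, ← sum_add_sum_compl {a, b}, sum_pair hab, sum_pair hab]
  calc _ = (((NCGraph s').edist i a : ℝ≥0∞) + 1) + (((NCGraph s').edist i b : ℝ≥0∞) + 1)
        + ∑ j ∈ {a, b}ᶜ, ((NCGraph s').edist i j : ℝ≥0∞) := by ring
    _ ≤ _ := by gcongr <;> exact hnew ‹_› ‹_›

lemma cost_lt_of_two_new_neighbours {α : ℝ} (hα : α < 2) {s s' : Profile n} {i a b : Fin n}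
    (hfin : dCost s i ≠ ⊤) (hle : NCGraph s ≤ NCGraph s') (hcard : (s' i).card = (s i).card + 1)
    (hab : a ≠ b) (ha : ¬(NCGraph s).Adj i a) (ha' : (NCGraph s').Adj i a)
    (hb : ¬(NCGraph s).Adj i b) (hb' : (NCGraph s').Adj i b) :
    cost α s' i < cost α s i := by
  have hα' : ENNReal.ofReal α < 2 := by
    simpa using (ENNReal.ofReal_lt_ofReal_iff two_pos).2 hα
  have hgain := dCost_add_two_le hle hab ha ha' hb hb'
  have hfin' : ENNReal.ofReal α * (s i).card + dCost s' i ≠ ⊤ :=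
    ENNReal.add_ne_top.2 ⟨ENNReal.mul_ne_top ENNReal.ofReal_ne_top (ENNReal.natCast_ne_top _),
      ne_top_of_le_ne_top hfin (le_self_add.trans hgain)⟩
  calc cost α s' i = ENNReal.ofReal α * (s i).card + dCost s' i + ENNReal.ofReal α := by
        rw [cost, hcard]
        push_cast
        ring
    _ < ENNReal.ofReal α * (s i).card + dCost s' i + 2 := ENNReal.add_lt_add_left hfin' hα'
    _ ≤ cost α s i := by
        rw [cost, add_assoc]
        gcongr

theorem IsStrongEq.false_of_cyclic_successor {α : ℝ} (hα : α < 2) {s : Profile n} (hv : Valid s)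
    (hSE : IsStrongEq α s) (K : Finset (Fin n)) (f : Fin n → Fin n) (hK : K.Nonempty)
    (hadj : ∀ i ∈ K, (NCGraph s)ᶜ.Adj i (f i)) (hpred : ∀ i ∈ K, ∃ b ∈ K, f b = i ∧ b ≠ f i) :
    False := by
  classical
  let s' : Profile n := fun i => if i ∈ K then insert (f i) (s i) else s i
  have hs'K : ∀ i ∈ K, s' i = insert (f i) (s i) := fun i hi => if_pos hi
  have hs'nK : ∀ i ∉ K, s' i = s i := fun i hi => if_neg hi
  have hsub : ∀ i, s i ⊆ s' i := by
    intro i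
    by_cases hi : i ∈ K
    · rw [hs'K i hi]
      exact subset_insert _ _
    · rw [hs'nK i hi]
  have hvalid : Valid s' := by
    intro i
    by_cases hi : i ∈ K
    · rw [hs'K i hi, mem_insert]
      exact not_or.2 ⟨(hadj i hi).ne, hv i⟩
    · rw [hs'nK i hi]
      exact hv i
  have hbuy : ∀ i ∈ K, (NCGraph s').Adj i (f i) := fun i hi =>
    (ncgraph_adj _ _ _).2 ⟨(hadj i hi).ne, Or.inl (by rw [hs'K i hi]; exact mem_insert_self _ _)⟩
  obtain ⟨i, hi, hle⟩ := hSE K s' hK hvalid hs'nK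
  obtain ⟨b, hb, rfl, hbf⟩ := hpred i hi
  have hnew := (hadj _ hi).2
  have hcard : (s' (f b)).card = (s (f b)).card + 1 := by
    rw [hs'K _ hi, card_insert_of_notMem]
    exact fun h => hnew ((ncgraph_adj _ _ _).2 ⟨(hadj _ hi).ne, Or.inl h⟩)
  refine hle.not_gt (cost_lt_of_two_new_neighbours hα ?_ (ncgraph_mono hsub) hcard hbf.symm
    hnew (hbuy _ hi) (fun h => (hadj b hb).2 h.symm) (hbuy b hb).symm)
  exact (dCost_ne_top_iff s _).2 (hSE.reachable _)

end NetworkCreation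

theorem stmt4_general {n : ℕ} (α : ℝ) (hα : α < 2)
    (s : Profile n) (hv : Valid s) (hSE : IsStrongEq α s) :
    (NCGraph s)ᶜ.IsAcyclic := by
  intro v p hp
  classical
  obtain ⟨K, f, hK, hadj, hpred⟩ := hp.exists_cyclic_successor
  exact hSE.false_of_cyclic_successor hα hv K f hK hadj hpred

/-- For `α < 2`, the complement of the graph of a strong equilibrium is a forest. -/
theorem stmt4 {n : ℕ} (hn : 3 ≤ n) (α : ℝ) (hα0 : 0 ≤ α) (hα : α < 2)
    (s : Profile n) (hv : Valid s) (hSE : IsStrongEq α s) :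
    (NCGraph s)ᶜ.IsAcyclic :=
  stmt4_general α hα s hv hSE
end

section
/- For α < 2 and n ≥ 3, if s is a strong equilibrium of the network creation game, then G(s) contains no independent set of size 3. -/
open SimpleGraph ENNReal Finset

/-!
Suppose `a`, `b`, `c` are pairwise non-adjacent in `G(s)`. Let the coalition `{a, b, c}` close a
triangle, `a` buying the edge to `b`, `b` to `c` and `c` to `a`. Each member pays `α` for one
edge, while its distances to the other two members drop from at least `2` to `1` and no other
distance grows, so its cost decreases by at least `2 - α > 0`. This needs the distance costs to be
finite, which holds in a strong equilibrium because a single player could otherwise buy edges to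
everybody.
-/

namespace SimpleGraph

variable {V : Type*} {G G' : SimpleGraph V} {u v : V}

lemma two_le_edist (huv : u ≠ v) (h : ¬G.Adj u v) : 2 ≤ G.edist u v := by
  have h1 : 1 < G.edist u v :=
    lt_of_le_of_ne (Order.one_le_iff_pos.mpr (edist_pos_of_ne huv))
      (fun h' => h (edist_eq_one_iff_adj.mp h'.symm))
  exact Order.add_one_le_of_lt h1

lemma sum_edist_add_two_le [Fintype V] [DecidableEq V] (hle : G ≤ G') {x y z : V} (hyz : y ≠ z)
    (hy : ¬G.Adj x y) (hz : ¬G.Adj x z) (hy' : G'.Adj x y) (hz' : G'.Adj x z) :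
    ∑ j, (G'.edist x j : ℝ≥0∞) + 2 ≤ ∑ j, (G.edist x j : ℝ≥0∞) := by
  have hz_mem : z ∈ univ.erase y := mem_erase.mpr ⟨hyz.symm, mem_univ z⟩
  have split : ∀ H : SimpleGraph V, ∑ j, (H.edist x j : ℝ≥0∞) =
      H.edist x y + (H.edist x z + ∑ j ∈ (univ.erase y).erase z, (H.edist x j : ℝ≥0∞)) := by
    intro H
    rw [← add_sum_erase _ _ (mem_univ y), ← add_sum_erase _ _ hz_mem]
  have two_le : ∀ w, x ≠ w → ¬G.Adj x w → (2 : ℝ≥0∞) ≤ G.edist x w := fun w hw hn => by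
    exact_mod_cast two_le_edist hw hn
  rw [split G', split G, edist_eq_one_iff_adj.mpr hy', edist_eq_one_iff_adj.mpr hz']
  calc ((1 : ℕ∞) : ℝ≥0∞) + (((1 : ℕ∞) : ℝ≥0∞) +
        ∑ j ∈ (univ.erase y).erase z, (G'.edist x j : ℝ≥0∞)) + 2
      = 2 + (2 + ∑ j ∈ (univ.erase y).erase z, (G'.edist x j : ℝ≥0∞)) := by
        push_cast; ring
    _ ≤ _ := by
      gcongr
      exacts [two_le y hy'.ne hy, two_le z hz'.ne hz]

end SimpleGraph

section Profiles

variable {n : ℕ} {s s' : Profile n} {i j : Fin n}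

lemma ncGraph_adj_of_mem (hij : i ≠ j) (h : j ∈ s i) : (NCGraph s).Adj i j :=
  (fromRel_adj _ _ _).mpr ⟨hij, Or.inl h⟩

lemma ncGraph_mono (h : ∀ k, s k ⊆ s' k) : NCGraph s ≤ NCGraph s' := fun _ _ hadj =>
  (fromRel_adj _ _ _).mpr <| ((fromRel_adj _ _ _).mp hadj).imp_right <|
    Or.imp (fun hm => h _ hm) (fun hm => h _ hm)

lemma Valid.update (hv : Valid s) {t : Finset (Fin n)} (ht : i ∉ t) :
    Valid (Function.update s i t) := fun k => by
  rcases eq_or_ne k i with rfl | hk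
  · simpa using ht
  · simpa [Function.update_of_ne hk] using hv k

lemma dCost_ne_top_of_forall_mem (h : ∀ j ≠ i, j ∈ s i) : dCost s i ≠ ⊤ := by
  refine ENNReal.sum_ne_top.mpr fun j _ => ?_
  have hle : (NCGraph s).edist i j ≤ 1 := by
    rcases eq_or_ne j i with rfl | hj
    · simp
    · exact (edist_eq_one_iff_adj.mpr (ncGraph_adj_of_mem hj.symm (h j hj))).le
  exact ne_top_of_le_ne_top ENNReal.one_ne_top (by exact_mod_cast hle)

lemma cost_ne_top_iff {α : ℝ} : cost α s i ≠ ⊤ ↔ dCost s i ≠ ⊤ := by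
  simp [cost, ENNReal.mul_eq_top]

lemma IsStrongEq.dCost_ne_top {α : ℝ} (hv : Valid s) (hSE : IsStrongEq α s) (i : Fin n) :
    dCost s i ≠ ⊤ := by
  obtain ⟨k, hk, hle⟩ := hSE {i} (Function.update s i (univ.erase i)) (singleton_nonempty i)
    (hv.update (notMem_erase i univ))
    (fun k hk => Function.update_of_ne (by simpa using hk) _ _)
  obtain rfl : k = i := mem_singleton.mp hk
  have hbuy : dCost (Function.update s k (univ.erase k)) k ≠ ⊤ :=
    dCost_ne_top_of_forall_mem fun j hj => by simpa using hj
  exact cost_ne_top_iff.mp (ne_top_of_le_ne_top (cost_ne_top_iff.mpr hbuy) hle)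

lemma cost_lt_of_card_le_of_dCost_add_two_le {α : ℝ} (hα : α < 2) {x : Fin n}
    (hfin : dCost s x ≠ ⊤) (hcard : #(s' x) ≤ #(s x) + 1) (hd : dCost s' x + 2 ≤ dCost s x) :
    cost α s' x < cost α s x := by
  set A := ENNReal.ofReal α
  have hA : A < 2 := by simpa [A] using (ENNReal.ofReal_lt_ofReal_iff two_pos).mpr hα
  have hfin' : dCost s' x ≠ ⊤ := ne_top_of_le_ne_top hfin (le_trans le_self_add hd)
  have hpay : A * #(s x) ≠ ⊤ := ENNReal.mul_ne_top ENNReal.ofReal_ne_top (ENNReal.natCast_ne_top _)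
  calc cost α s' x ≤ A * #(s x) + (A + dCost s' x) := by
        rw [cost, ← add_assoc, ← mul_add_one]
        gcongr
        exact_mod_cast hcard
    _ < A * #(s x) + (2 + dCost s' x) :=
        ENNReal.add_lt_add_left hpay (ENNReal.add_lt_add_right hfin' hA)
    _ ≤ cost α s x := by
        rw [cost, add_comm 2]
        gcongr

end Profiles

section Triangle

variable {n : ℕ} {s : Profile n} {a b c : Fin n}

def buyTriangle (s : Profile n) (a b c : Fin n) : Profile n :=
  Function.update (Function.update (Function.update s a (insert b (s a))) b (insert c (s b)))
    c (insert a (s c))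

lemma buyTriangle_rotate (hab : a ≠ b) (hac : a ≠ c) :
    buyTriangle s b c a = buyTriangle s a b c := by
  unfold buyTriangle
  rw [Function.update_comm hac.symm, Function.update_comm hab.symm]

lemma buyTriangle_of_notMem {k : Fin n} (hk : k ∉ ({a, b, c} : Finset (Fin n))) :
    buyTriangle s a b c k = s k := by
  simp only [mem_insert, mem_singleton, not_or] at hk
  simp [buyTriangle, Function.update_of_ne, hk]

lemma subset_buyTriangle (k : Fin n) : s k ⊆ buyTriangle s a b c k := by
  simp only [buyTriangle, Function.update_apply]
  split_ifs <;> subst_vars <;> simp [subset_insert]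

lemma buyTriangle_self (hab : a ≠ b) (hac : a ≠ c) : buyTriangle s a b c a = insert b (s a) := by
  simp [buyTriangle, Function.update_of_ne hab, Function.update_of_ne hac]

lemma Valid.buyTriangle (hv : Valid s) (hab : a ≠ b) (hbc : b ≠ c) (hac : a ≠ c) :
    Valid (buyTriangle s a b c) :=
  ((hv.update (by simp [hab, hv a])).update (by simp [hbc, hv b])).update
    (by simp [hac.symm, hv c])

lemma cost_buyTriangle_lt {α : ℝ} (hα : α < 2) (hab : a ≠ b) (hbc : b ≠ c) (hac : a ≠ c)
    (hfin : dCost s a ≠ ⊤) (hnab : ¬(NCGraph s).Adj a b) (hnac : ¬(NCGraph s).Adj a c) :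
    cost α (buyTriangle s a b c) a < cost α s a := by
  have hab' : (NCGraph (buyTriangle s a b c)).Adj a b :=
    ncGraph_adj_of_mem hab (by simp [buyTriangle_self hab hac])
  have hca' : (NCGraph (buyTriangle s a b c)).Adj c a := by
    rw [← buyTriangle_rotate hab hac, ← buyTriangle_rotate hbc hab.symm]
    exact ncGraph_adj_of_mem hac.symm (by simp [buyTriangle_self hac.symm hbc.symm])
  refine cost_lt_of_card_le_of_dCost_add_two_le hα hfin ?_ ?_
  · rw [buyTriangle_self hab hac]
    exact card_insert_le _ _
  · exact sum_edist_add_two_le (ncGraph_mono subset_buyTriangle) hbc hnab hnac hab' hca'.symm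

end Triangle

theorem stmt5_general {n : ℕ} (α : ℝ) (hα : α < 2)
    (s : Profile n) (hv : Valid s) (hSE : IsStrongEq α s) :
    ¬∃ a b c : Fin n, a ≠ b ∧ a ≠ c ∧ b ≠ c ∧
      ¬(NCGraph s).Adj a b ∧ ¬(NCGraph s).Adj a c ∧ ¬(NCGraph s).Adj b c := by
  rintro ⟨a, b, c, hab, hac, hbc, hnab, hnac, hnbc⟩
  have hfin := hSE.dCost_ne_top hv
  obtain ⟨i, hi, hle⟩ := hSE {a, b, c} (buyTriangle s a b c) (insert_nonempty _ _)
    (hv.buyTriangle hab hbc hac) (fun k hk => buyTriangle_of_notMem hk)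
  simp only [mem_insert, mem_singleton] at hi
  rcases hi with rfl | rfl | rfl
  · exact (cost_buyTriangle_lt hα hab hbc hac (hfin i) hnab hnac).not_ge hle
  · rw [← buyTriangle_rotate hab hac] at hle
    exact (cost_buyTriangle_lt hα hbc hac.symm hab.symm (hfin i) hnbc
      (fun h => hnab h.symm)).not_ge hle
  · rw [← buyTriangle_rotate hab hac, ← buyTriangle_rotate hbc hab.symm] at hle
    exact (cost_buyTriangle_lt hα hac.symm hab hbc.symm (hfin i) (fun h => hnac h.symm)
      (fun h => hnbc h.symm)).not_ge hle

/-- For `α < 2`, the graph of a strong equilibrium contains no independent set of size `3`. -/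
theorem stmt5 {n : ℕ} (hn : 3 ≤ n) (α : ℝ) (hα0 : 0 ≤ α) (hα : α < 2)
    (s : Profile n) (hv : Valid s) (hSE : IsStrongEq α s) :
    ¬∃ a b c : Fin n, a ≠ b ∧ a ≠ c ∧ b ≠ c ∧
      ¬(NCGraph s).Adj a b ∧ ¬(NCGraph s).Adj a c ∧ ¬(NCGraph s).Adj b c :=
  stmt5_general α hα s hv hSE
end

section
/- For α ≥ 2, every rational strategy profile s such that G(s) is a star (one center vertex adjacent to all other n−1 vertices, no other edges) is a strong equilibrium of the network creation game. -/
/-!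
If every vertex is within distance 2 of `i`, the distance cost of `i` is exactly
`2 (n - 1) - deg i`, and in any connected graph it is at least that. Hence every member `i` of an
improving coalition satisfies `α |s' i| + deg i < α |s i| + deg' i`, and the new graph is connected.

If the centre deviates, add these inequalities over all vertices (outsiders are leaves, which keep
degree at least 1). Rationality makes `Σ |s|` the number `m ≤ n - 1` of edges of the star, so with
`Σ deg' ≤ 2 Σ |s'|` this gives `(α - 2) (Σ |s'| - m) < 0`, impossible as the connected new graph has
at least `n - 1` edges, each bought by someone.

Otherwise the coalition consists of leaves, and integrality turns the inequality into
`2 |s' i| + 2 ≤ 2 |s i| + deg' i`. The edges at the coalition are bought by its members or by the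
centre, and counting them shows that the centre buys none of them and that the members buy only
edges inside the coalition. So no edge leaves the coalition, contradicting connectivity.
-/

open SimpleGraph ENNReal Finset

namespace SimpleGraph

variable {V : Type*} {G : SimpleGraph V}

theorem Reachable.mem_of_adj_mem {S : Set V} (hS : ∀ ⦃u v⦄, G.Adj u v → u ∈ S → v ∈ S)
    {u v : V} (huv : G.Reachable u v) (hu : u ∈ S) : v ∈ S := by
  obtain ⟨p⟩ := huv
  induction p with
  | nil => exact hu
  | cons hadj _ ih => exact ih (hS hadj hu)

section Finite

variable [Fintype V] [DecidableRel G.Adj]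

theorem sum_dist_add_degree [DecidableEq V] (i : V) :
    ∑ j, G.dist i j + G.degree i =
      ∑ j ∈ univ.erase i, (G.dist i j + if G.Adj i j then 1 else 0) := by
  rw [← card_neighborFinset_eq_degree, neighborFinset_eq_filter, card_filter, ← sum_add_distrib,
    ← sum_erase_add _ _ (mem_univ i)]
  simp

theorem Connected.two_mul_card_sub_one_le (hG : G.Connected) (i : V) :
    2 * (Fintype.card V - 1) ≤ ∑ j, G.dist i j + G.degree i := by
  classical
  rw [sum_dist_add_degree, ← card_univ, ← card_erase_of_mem (mem_univ i), mul_comm,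
    ← smul_eq_mul, ← sum_const]
  refine sum_le_sum fun j hj => ?_
  have hne : i ≠ j := (ne_of_mem_erase hj).symm
  split_ifs with hadj
  · simp [dist_eq_one_iff_adj.mpr hadj]
  · have h0 : G.dist i j ≠ 0 := by rwa [Ne, hG.dist_eq_zero_iff]
    have h1 : G.dist i j ≠ 1 := by rwa [Ne, dist_eq_one_iff_adj]
    omega

theorem sum_dist_add_degree_le (i : V) (h : ∀ j, G.dist i j ≤ 2) :
    ∑ j, G.dist i j + G.degree i ≤ 2 * (Fintype.card V - 1) := by
  classical
  rw [sum_dist_add_degree, ← card_univ, ← card_erase_of_mem (mem_univ i), mul_comm,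
    ← smul_eq_mul, ← sum_const]
  refine sum_le_sum fun j _ => ?_
  split_ifs with hadj
  · simp [dist_eq_one_iff_adj.mpr hadj]
  · simpa using h j

end Finite

def IsStarCenter (G : SimpleGraph V) (c : V) : Prop :=
  ∀ i j, G.Adj i j ↔ i ≠ j ∧ (i = c ∨ j = c)

namespace IsStarCenter

variable {c : V} (hc : G.IsStarCenter c)
include hc

theorem adj_center {i : V} (hi : i ≠ c) : G.Adj i c := (hc i c).mpr ⟨hi, Or.inr rfl⟩

theorem reachable_center (i : V) : G.Reachable i c := by
  by_cases hi : i = c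
  · rw [hi]
  · exact (hc.adj_center hi).reachable

theorem connected : G.Connected :=
  (connected_iff_exists_forall_reachable G).mpr ⟨c, fun i => (hc.reachable_center i).symm⟩

theorem dist_le_two (i j : V) : G.dist i j ≤ 2 := by
  by_cases hij : G.Adj i j
  · simp [dist_eq_one_iff_adj.mpr hij]
  by_cases hi : i = c
  · obtain rfl : j = i := by
      by_contra hji
      exact hij ((hc i j).mpr ⟨Ne.symm hji, Or.inl hi⟩)
    simp
  by_cases hj : j = c
  · exact absurd (hj ▸ hc.adj_center hi) hij
  exact (dist_le ((Walk.nil.cons (hc.adj_center hj).symm).cons (hc.adj_center hi))).trans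
    (by simp)

variable [Fintype V] [DecidableRel G.Adj]

theorem degree_eq_one {i : V} (hi : i ≠ c) : G.degree i = 1 := by
  rw [← card_neighborFinset_eq_degree, card_eq_one]
  refine ⟨c, eq_singleton_iff_unique_mem.mpr ⟨by simpa using hc.adj_center hi, fun j hj => ?_⟩⟩
  simp only [mem_neighborFinset, hc i j] at hj
  tauto

theorem card_edgeFinset_le : #G.edgeFinset ≤ Fintype.card V - 1 := by
  classical
  calc #G.edgeFinset ≤ #((univ.erase c).image fun j => s(c, j)) := by
        refine card_le_card fun e he => ?_
        induction e using Sym2.ind with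
        | _ i j =>
          rw [mem_edgeFinset, mem_edgeSet, hc] at he
          simp only [mem_image, mem_erase, mem_univ, and_true, Sym2.eq_iff]
          rcases he with ⟨hij, rfl | rfl⟩
          · exact ⟨j, hij.symm, by simp⟩
          · exact ⟨i, hij, by simp⟩
    _ ≤ #(univ.erase c) := card_image_le
    _ = Fintype.card V - 1 := by rw [card_erase_of_mem (mem_univ c), card_univ]

end IsStarCenter

end SimpleGraph

section Profile

variable {n : ℕ}

theorem NCGraph.adj_iff {s : Profile n} {i j : Fin n} :
    (NCGraph s).Adj i j ↔ i ≠ j ∧ (j ∈ s i ∨ i ∈ s j) :=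
  fromRel_adj _ i j

theorem NCGraph.edgeFinset_eq_image {s : Profile n} (hv : Valid s) :
    (NCGraph s).edgeFinset = (univ.sigma s).image fun p => s(p.1, p.2) := by
  ext e
  induction e using Sym2.ind with
  | _ i j =>
    simp only [mem_edgeFinset, mem_edgeSet, adj_iff, mem_image, mem_sigma, mem_univ, true_and,
      Sigma.exists, Sym2.eq_iff]
    constructor
    · rintro ⟨-, h | h⟩
      · exact ⟨i, j, h, Or.inl ⟨rfl, rfl⟩⟩
      · exact ⟨j, i, h, Or.inr ⟨rfl, rfl⟩⟩
    · rintro ⟨a, b, hab, ⟨rfl, rfl⟩ | ⟨rfl, rfl⟩⟩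
      · exact ⟨fun h => hv a (h ▸ hab), Or.inl hab⟩
      · exact ⟨fun h => hv a (h ▸ hab), Or.inr hab⟩

theorem NCGraph.card_edgeFinset_le {s : Profile n} (hv : Valid s) :
    #(NCGraph s).edgeFinset ≤ ∑ i, #(s i) := by
  rw [edgeFinset_eq_image hv, ← card_sigma]
  exact card_image_le

theorem NCGraph.card_edgeFinset_eq {s : Profile n} (hv : Valid s) (hr : Rational s) :
    #(NCGraph s).edgeFinset = ∑ i, #(s i) := by
  rw [edgeFinset_eq_image hv, ← card_sigma]
  refine card_image_of_injOn fun p hp q hq hpq => ?_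
  simp only [coe_sigma, Set.mem_sigma_iff, mem_coe, mem_univ, true_and] at hp hq
  rcases Sym2.eq_iff.mp hpq with ⟨h1, h2⟩ | ⟨h1, h2⟩
  · exact Sigma.ext h1 (heq_of_eq h2)
  · exact absurd (h2 ▸ h1 ▸ hq) (hr _ _ hp)

theorem NCGraph.degree_le (s : Profile n) (i : Fin n) :
    (NCGraph s).degree i ≤ #(s i) + #{j | i ∈ s j} := by
  rw [← card_neighborFinset_eq_degree]
  refine (card_le_card fun j hj => ?_).trans (card_union_le _ _)
  rw [mem_neighborFinset, adj_iff] at hj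
  simpa using hj.2

theorem NCGraph.sum_degree_le (s : Profile n) (K : Finset (Fin n)) :
    ∑ i ∈ K, (NCGraph s).degree i ≤ ∑ i ∈ K, #(s i) + ∑ j, #(s j ∩ K) :=
  calc ∑ i ∈ K, (NCGraph s).degree i ≤ ∑ i ∈ K, (#(s i) + #{j | i ∈ s j}) :=
        sum_le_sum fun i _ => degree_le s i
    _ = ∑ i ∈ K, #(s i) + ∑ j, #(s j ∩ K) := by
        rw [sum_add_distrib]
        congr 1
        simp only [card_filter, inter_comm _ K, ← filter_mem_eq_inter]
        exact sum_comm

theorem connected_of_cost_ne_top {α : ℝ} {s : Profile n} {i : Fin n} (h : cost α s i ≠ ⊤) :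
    (NCGraph s).Connected := by
  refine (connected_iff_exists_forall_reachable _).mpr ⟨i, fun j => ?_⟩
  rw [← edist_ne_top_iff_reachable]
  intro hj
  have : ((NCGraph s).edist i j : ℝ≥0∞) ≤ dCost s i :=
    single_le_sum (f := fun j => ((NCGraph s).edist i j : ℝ≥0∞)) (fun _ _ => zero_le)
      (mem_univ j)
  simp [cost, top_le_iff.mp (hj ▸ this)] at h

theorem cost_eq_ofReal {α : ℝ} (hα : 0 ≤ α) {s : Profile n} (hs : (NCGraph s).Connected)
    (i : Fin n) : cost α s i = ENNReal.ofReal (α * #(s i) + ∑ j, (NCGraph s).dist i j) := by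
  have hd : dCost s i = ∑ j, ((NCGraph s).dist i j : ℝ≥0∞) :=
    sum_congr rfl fun j _ => by rw [← (hs i j).coe_dist_eq_edist]; rfl
  rw [cost, hd, ENNReal.ofReal_add (by positivity) (by positivity), ENNReal.ofReal_mul hα,
    ENNReal.ofReal_natCast, ENNReal.ofReal_natCast, Nat.cast_sum]

theorem add_degree_lt_of_cost_lt {α : ℝ} (hα : 0 ≤ α) {s s' : Profile n} {i : Fin n}
    (hs : (NCGraph s).Connected) (hecc : ∀ j, (NCGraph s).dist i j ≤ 2)
    (h : cost α s' i < cost α s i) :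
    α * #(s' i) + (NCGraph s).degree i < α * #(s i) + (NCGraph s').degree i := by
  have hs' := connected_of_cost_ne_top h.ne_top
  rw [cost_eq_ofReal hα hs, cost_eq_ofReal hα hs', ENNReal.ofReal_lt_ofReal_iff'] at h
  have hdist : ∑ j, (NCGraph s).dist i j + (NCGraph s).degree i ≤
      ∑ j, (NCGraph s').dist i j + (NCGraph s').degree i :=
    (sum_dist_add_degree_le i hecc).trans (hs'.two_mul_card_sub_one_le i)
  have : ((∑ j, (NCGraph s).dist i j + (NCGraph s).degree i : ℕ) : ℝ) ≤
      ((∑ j, (NCGraph s').dist i j + (NCGraph s').degree i : ℕ) : ℝ) := by exact_mod_cast hdist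
  push_cast at this h
  linarith [h.1]

end Profile

theorem two_mul_add_two_le_of_lt {α : ℝ} (hα : 2 ≤ α) {b b' d : ℕ} (hb : b ≤ 1)
    (h : α * b' + 1 < α * b + d) : 2 * b' + 2 ≤ 2 * b + d := by
  by_contra! hlt
  have hd : (d : ℝ) + 2 * b ≤ 2 * b' + 1 := by exact_mod_cast (by omega : d + 2 * b ≤ 2 * b' + 1)
  interval_cases b <;> push_cast at h hd
  · nlinarith [mul_nonneg (by linarith : (0 : ℝ) ≤ α - 2) (Nat.cast_nonneg (α := ℝ) b')]
  · obtain rfl | hb' := Nat.eq_zero_or_pos b'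
    · omega
    · have : (1 : ℝ) ≤ b' := by exact_mod_cast hb'
      nlinarith [mul_nonneg (by linarith : (0 : ℝ) ≤ α - 2) (by linarith : (0 : ℝ) ≤ b' - 1)]

section Star

variable {n : ℕ} {s s' : Profile n} {c : Fin n} {K : Finset (Fin n)} {α : ℝ}

theorem subset_singleton_of_ne_center (hc : (NCGraph s).IsStarCenter c) (hv : Valid s)
    {i : Fin n} (hi : i ≠ c) : s i ⊆ {c} := fun j hj => by
  have hadj : (NCGraph s).Adj i j := NCGraph.adj_iff.mpr ⟨fun h => hv i (h ▸ hj), Or.inl hj⟩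
  simpa [hi] using ((hc i j).mp hadj).2

theorem card_eq_ite_of_ne_center (hc : (NCGraph s).IsStarCenter c) (hv : Valid s)
    (hr : Rational s) {i : Fin n} (hi : i ≠ c) : #(s i) = if i ∈ s c then 0 else 1 := by
  have hsub := subset_singleton_of_ne_center hc hv hi
  split_ifs with hic
  · exact card_eq_zero.mpr (subset_singleton_iff.mp hsub |>.resolve_right
      fun h => hr c i hic (h ▸ mem_singleton_self c))
  · have hci : c ∈ s i := by
      simpa [hic] using (NCGraph.adj_iff.mp (hc.adj_center hi)).2
    exact card_eq_one.mpr ⟨c, subset_singleton_iff.mp hsub |>.resolve_left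
      (ne_empty_of_mem hci)⟩

theorem not_forall_improves_of_center_mem (hα : 2 ≤ α) (hc : (NCGraph s).IsStarCenter c)
    (hv : Valid s) (hr : Rational s) (hv' : Valid s') (hs' : (NCGraph s').Connected)
    (hfix : ∀ i ∉ K, s' i = s i) (hcK : c ∈ K) :
    ¬ ∀ i ∈ K, α * #(s' i) + (NCGraph s).degree i < α * #(s i) + (NCGraph s').degree i := by
  intro himp
  have hle : ∀ v ∈ univ,
      α * #(s' v) + (NCGraph s).degree v ≤ α * #(s v) + (NCGraph s').degree v := by
    intro v _
    by_cases hvK : v ∈ K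
    · exact (himp v hvK).le
    · have hvc : v ≠ c := fun h => hvK (h ▸ hcK)
      have : Nontrivial (Fin n) := nontrivial_of_ne v c hvc
      have hpos : (1 : ℝ) ≤ (NCGraph s').degree v := by
        exact_mod_cast hs'.preconnected.degree_pos_of_nontrivial v
      rw [hfix v hvK, hc.degree_eq_one hvc]
      push_cast
      linarith
  have hsum := sum_lt_sum hle ⟨c, mem_univ c, himp c hcK⟩
  simp only [sum_add_distrib, ← mul_sum, ← Nat.cast_sum, sum_degrees_eq_twice_card_edges,
    ← NCGraph.card_edgeFinset_eq hv hr] at hsum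
  have hE' := NCGraph.card_edgeFinset_le hv'
  have hEE' : #(NCGraph s).edgeFinset ≤ #(NCGraph s').edgeFinset := by
    have hstar := hc.card_edgeFinset_le
    have hconn := hs'.card_vert_le_card_edgeSet_add_one
    simp only [Nat.card_eq_fintype_card, ← edgeFinset_card, Fintype.card_fin] at hstar hconn
    omega
  have hE'R : (#(NCGraph s').edgeFinset : ℝ) ≤ ∑ i, (#(s' i) : ℝ) := by exact_mod_cast hE'
  have hEE'R : (#(NCGraph s).edgeFinset : ℝ) ≤ #(NCGraph s').edgeFinset := by exact_mod_cast hEE'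
  push_cast at hsum
  nlinarith [mul_nonneg (by linarith : (0 : ℝ) ≤ α - 2) (sub_nonneg.mpr (hEE'R.trans hE'R))]

theorem not_forall_improves_of_center_not_mem (hα : 2 ≤ α) (hc : (NCGraph s).IsStarCenter c)
    (hv : Valid s) (hr : Rational s) (hs' : (NCGraph s').Connected)
    (hfix : ∀ i ∉ K, s' i = s i) (hcK : c ∉ K) (hK : K.Nonempty) :
    ¬ ∀ i ∈ K, α * #(s' i) + (NCGraph s).degree i < α * #(s i) + (NCGraph s').degree i := by
  intro himp
  have hleaf : ∀ i ∈ K, i ≠ c := fun i hi h => hcK (h ▸ hi)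
  have hmember : ∀ i ∈ K, 2 * #(s' i) + 2 ≤ 2 * #(s i) + (NCGraph s').degree i := by
    intro i hi
    refine two_mul_add_two_le_of_lt hα ?_ ?_
    · rw [card_eq_ite_of_ne_center hc hv hr (hleaf i hi)]; split_ifs <;> simp
    · simpa [hc.degree_eq_one (hleaf i hi)] using himp i hi
  have hbought : ∑ i ∈ K, #(s i) + #(s c ∩ K) = #K := by
    rw [inter_comm, ← filter_mem_eq_inter, card_filter, ← sum_add_distrib, card_eq_sum_ones]
    refine sum_congr rfl fun i hi => ?_
    rw [card_eq_ite_of_ne_center hc hv hr (hleaf i hi)]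
    split_ifs <;> rfl
  have houtside : ∑ j, #(s' j ∩ K) = ∑ j ∈ K, #(s' j ∩ K) + #(s c ∩ K) := by
    rw [← sum_add_sum_compl K, sum_eq_single_of_mem c (mem_compl.mpr hcK), hfix c hcK]
    intro j hj hjc
    rw [hfix j (mem_compl.mp hj), card_eq_zero, eq_empty_iff_forall_notMem]
    intro i hi
    have := subset_singleton_of_ne_center hc hv hjc (mem_inter.mp hi).1
    exact hleaf i (mem_inter.mp hi).2 (mem_singleton.mp this)
  have hsum := sum_le_sum hmember
  have hsupply := NCGraph.sum_degree_le s' K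
  have hinside : ∑ j ∈ K, #(s' j ∩ K) ≤ ∑ j ∈ K, #(s' j) :=
    sum_le_sum fun j _ => card_le_card inter_subset_left
  simp only [sum_add_distrib, ← mul_sum, sum_const, smul_eq_mul] at hsum
  have hclosed : ∀ ⦃u x⦄, (NCGraph s').Adj u x → u ∈ K → x ∈ K := by
    intro u x hux hu
    by_contra hx
    rcases (NCGraph.adj_iff.mp hux).2 with hxu | hux
    · have : ∑ j ∈ K, #(s' j ∩ K) < ∑ j ∈ K, #(s' j) :=
        sum_lt_sum (fun j _ => card_le_card inter_subset_left)
          ⟨u, hu, card_lt_card ⟨inter_subset_left, fun h => hx (mem_inter.mp (h hxu)).2⟩⟩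
      omega
    · rw [hfix x hx] at hux
      by_cases hxc : x = c
      · subst hxc
        have : 0 < #(s x ∩ K) := card_pos.mpr ⟨u, mem_inter.mpr ⟨hux, hu⟩⟩
        omega
      · exact hleaf u hu (mem_singleton.mp (subset_singleton_of_ne_center hc hv hxc hux))
  obtain ⟨i₀, hi₀⟩ := hK
  exact hcK ((hs' i₀ c).mem_of_adj_mem hclosed hi₀)

end Star

theorem stmt10_general {n : ℕ} (α : ℝ) (hα : 2 ≤ α)
    (s : Profile n) (hv : Valid s) (hr : Rational s) (hstar : IsStar (NCGraph s)) :
    IsStrongEq α s := by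
  obtain ⟨c, hc⟩ := hstar
  have hc : (NCGraph s).IsStarCenter c := hc
  intro K s' ⟨i₀, hi₀⟩ hv' hfix
  by_contra! hlt
  have hs' := connected_of_cost_ne_top (hlt i₀ hi₀).ne_top
  have himp : ∀ i ∈ K,
      α * #(s' i) + (NCGraph s).degree i < α * #(s i) + (NCGraph s').degree i :=
    fun i hi => add_degree_lt_of_cost_lt (by linarith) hc.connected (hc.dist_le_two i) (hlt i hi)
  by_cases hcK : c ∈ K
  · exact not_forall_improves_of_center_mem hα hc hv hr hv' hs' hfix hcK himp
  · exact not_forall_improves_of_center_not_mem hα hc hv hr hs' hfix hcK ⟨i₀, hi₀⟩ himp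

/-- For `α ≥ 2`, every rational profile forming a star is a strong equilibrium. -/
theorem stmt10 {n : ℕ} (hn : 3 ≤ n) (α : ℝ) (hα : 2 ≤ α)
    (s : Profile n) (hv : Valid s) (hr : Rational s) (hstar : IsStar (NCGraph s)) :
    IsStrongEq α s :=
  stmt10_general α hα s hv hr hstar
end

section
/- Let α ≥ 2, let s be a rational strategy profile forming a star, and let s' = (s'_K, s_{−K}) be a deviation by coalition K with c_i(s') < c_i(s) for all i ∈ K. Then for every leaf player i ∈ K (deg_{G(s)}(i) = 1), we have f(s',i) > f(s,i) and f(s',i) − f(s,i) ≥ |s'_i| − |s_i| + 1. -/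
open SimpleGraph ENNReal Finset

/-! A leaf of the star is at distance 1 from the centre and 2 from everyone else. In general, a
player at distance 1 from her `deg` neighbours and at least 2 from the others has distance cost at
least `2(n - 1) - deg`, with equality when no distance exceeds 2. So the leaf `i` pays exactly
`α|s_i| + 2(n - 1) - 1`, and after the deviation at least `α|s'_i| + 2(n - 1) - deg'(i)`, where
`deg'(i) ≥ 1` because her new cost is finite. A strict improvement gives
`α(|s'_i| - |s_i|) + 1 < deg'(i)`, and `α ≥ 2` turns this into
`deg'(i) ≥ 2(|s'_i| - |s_i|) + 2`, which contains both claims. -/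

namespace SimpleGraph

variable {V : Type*} (G : SimpleGraph V) (i : V)

lemma sum_edist_add_degree [Fintype V] [DecidableRel G.Adj] :
    ∑ j, G.edist i j + G.degree i = ∑ j, (G.edist i j + if G.Adj i j then 1 else 0) := by
  rw [sum_add_distrib, sum_boole, ← neighborFinset_eq_filter, card_neighborFinset_eq_degree]

lemma le_edist_add_indicator_adj [DecidableEq V] [DecidableRel G.Adj] (j : V) :
    (if j = i then 0 else 2 : ℕ∞) ≤ G.edist i j + if G.Adj i j then 1 else 0 := by
  by_cases hji : j = i
  · simp [hji]
  by_cases hadj : G.Adj i j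
  · simp [hji, hadj, edist_eq_one_iff_adj.2 hadj, one_add_one_eq_two]
  simp only [hji, hadj, if_false, add_zero]
  rw [← not_lt, ENat.lt_two_iff, Order.le_one_iff, edist_eq_zero_iff, edist_eq_one_iff_adj]
  exact fun h => h.elim (fun h => hji h.symm) hadj

lemma edist_add_indicator_adj_le [DecidableEq V] [DecidableRel G.Adj] {j : V}
    (h : G.edist i j ≤ 2) :
    G.edist i j + (if G.Adj i j then 1 else 0) ≤ if j = i then 0 else 2 := by
  by_cases hji : j = i
  · simp [hji]
  by_cases hadj : G.Adj i j
  · simp [hji, hadj, edist_eq_one_iff_adj.2 hadj, one_add_one_eq_two]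
  simpa [hji, hadj] using h

lemma two_mul_card_sub_one_eq_sum [Fintype V] [DecidableEq V] :
    ((2 * (Fintype.card V - 1) : ℕ) : ℕ∞) = ∑ j, if j = i then 0 else 2 := by
  rw [← sum_erase_add _ _ (mem_univ i), if_pos rfl, add_zero,
    sum_congr rfl fun j hj => if_neg (ne_of_mem_erase hj), sum_const,
    card_erase_of_mem (mem_univ i), card_univ, nsmul_eq_mul]
  push_cast
  ring

lemma two_mul_card_sub_one_le_sum_edist_add_degree [Fintype V] [DecidableRel G.Adj] :
    ((2 * (Fintype.card V - 1) : ℕ) : ℕ∞) ≤ ∑ j, G.edist i j + G.degree i := by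
  classical
  rw [two_mul_card_sub_one_eq_sum, sum_edist_add_degree]
  exact sum_le_sum fun j _ => G.le_edist_add_indicator_adj i j

lemma sum_edist_add_degree_eq_of_edist_le_two [Fintype V] [DecidableRel G.Adj]
    (h : ∀ j, G.edist i j ≤ 2) :
    ∑ j, G.edist i j + G.degree i = ((2 * (Fintype.card V - 1) : ℕ) : ℕ∞) := by
  classical
  refine le_antisymm ?_ (G.two_mul_card_sub_one_le_sum_edist_add_degree i)
  rw [two_mul_card_sub_one_eq_sum, sum_edist_add_degree]
  exact sum_le_sum fun j _ => G.edist_add_indicator_adj_le i (h j)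

lemma degree_pos_of_edist_ne_top [Fintype (G.neighborSet i)] {j : V} (hij : i ≠ j)
    (h : G.edist i j ≠ ⊤) : 0 < G.degree i := by
  obtain ⟨p⟩ := edist_ne_top_iff_reachable.1 h
  exact (G.degree_pos_iff_exists_adj i).2 ⟨_, Walk.adj_snd (Walk.not_nil_of_ne (p := p) hij)⟩

end SimpleGraph

lemma IsStar.edist_le_two {V : Type*} {G : SimpleGraph V} (h : IsStar G) (i j : V) :
    G.edist i j ≤ 2 := by
  obtain ⟨c, hc⟩ := h
  have edist_le_one : ∀ x, G.edist x c ≤ 1 := by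
    intro x
    rcases eq_or_ne x c with rfl | hx
    · simp
    · exact (edist_eq_one_iff_adj.2 ((hc x c).2 ⟨hx, Or.inr rfl⟩)).le
  calc G.edist i j ≤ G.edist i c + G.edist c j := G.edist_triangle
    _ ≤ 1 + 1 := add_le_add (edist_le_one i) (edist_comm.trans_le (edist_le_one j))
    _ = 2 := one_add_one_eq_two

section Costs

variable {n : ℕ}

lemma dCost_add_degree (s : Profile n) (i : Fin n) :
    dCost s i + (NCGraph s).degree i =
      ↑(∑ j, (NCGraph s).edist i j + (NCGraph s).degree i) := by
  rw [ENat.toENNReal_add, ENat.toENNReal_coe, dCost, ← ENat.toENNRealRingHom_apply, map_sum]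

lemma ofReal_le_cost_add_degree (α : ℝ) (s : Profile n) (i : Fin n) :
    ENNReal.ofReal (α * (s i).card + (2 * (n - 1) : ℕ)) ≤ cost α s i + (NCGraph s).degree i :=
  calc ENNReal.ofReal (α * (s i).card + (2 * (n - 1) : ℕ))
      ≤ ENNReal.ofReal α * (s i).card + (2 * (n - 1) : ℕ) := by
        refine ENNReal.ofReal_add_le.trans_eq ?_
        rw [ENNReal.ofReal_mul' (Nat.cast_nonneg _), ENNReal.ofReal_natCast,
          ENNReal.ofReal_natCast]
    _ ≤ cost α s i + (NCGraph s).degree i := by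
        have h := (NCGraph s).two_mul_card_sub_one_le_sum_edist_add_degree i
        rw [Fintype.card_fin] at h
        rw [cost, add_assoc, dCost_add_degree, ← ENat.toENNReal_coe]
        gcongr
        exact ENat.toENNReal_le.2 h

lemma cost_add_degree_of_edist_le_two {α : ℝ} (hα : 0 ≤ α) {s : Profile n} {i : Fin n}
    (h : ∀ j, (NCGraph s).edist i j ≤ 2) :
    cost α s i + (NCGraph s).degree i =
      ENNReal.ofReal (α * (s i).card + (2 * (n - 1) : ℕ)) := by
  rw [cost, add_assoc, dCost_add_degree, sum_edist_add_degree_eq_of_edist_le_two _ _ h,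
    Fintype.card_fin, ENNReal.ofReal_add (by positivity) (by positivity), ENNReal.ofReal_mul hα,
    ENNReal.ofReal_natCast, ENNReal.ofReal_natCast, ENat.toENNReal_coe]

lemma mul_card_sub_degree_lt_of_cost_lt {α : ℝ} (hα : 0 ≤ α) {s s' : Profile n} {i : Fin n}
    (hs : ∀ j, (NCGraph s).edist i j ≤ 2) (h : cost α s' i < cost α s i) :
    α * (s' i).card - (NCGraph s').degree i < α * (s i).card - (NCGraph s).degree i := by
  have hs_eq := cost_add_degree_of_edist_le_two hα hs
  have hs_top : cost α s i ≠ ⊤ :=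
    (ENNReal.add_ne_top.1 (hs_eq.trans_ne ENNReal.ofReal_ne_top)).1
  replace hs_eq := congrArg ENNReal.toReal hs_eq
  have hs'_le := (ENNReal.ofReal_le_iff_le_toReal (by finiteness)).1
    (ofReal_le_cost_add_degree α s' i)
  rw [ENNReal.toReal_add h.ne_top (ENNReal.natCast_ne_top _)] at hs'_le
  rw [ENNReal.toReal_add hs_top (ENNReal.natCast_ne_top _),
    ENNReal.toReal_ofReal (by positivity)] at hs_eq
  have := (ENNReal.toReal_lt_toReal h.ne_top hs_top).2 h
  simp only [ENNReal.toReal_natCast] at hs'_le hs_eq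
  linarith

lemma degree_pos_of_cost_ne_top {α : ℝ} {s : Profile n} {i j : Fin n} (hij : i ≠ j)
    (h : cost α s i ≠ ⊤) : 0 < (NCGraph s).degree i := by
  refine (NCGraph s).degree_pos_of_edist_ne_top i hij ?_
  have hd : dCost s i ≠ ⊤ := (ENNReal.add_ne_top.1 h).2
  exact ENat.toENNReal_ne_top.1 (ENNReal.sum_ne_top.1 hd j (mem_univ j))

end Costs

lemma two_mul_add_two_le_of_mul_add_one_lt {α : ℝ} (hα : 2 ≤ α) {x d : ℤ} (hd : 0 ≤ d)
    (h : α * x + 1 < d) : 2 * x + 2 ≤ d := by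
  rcases lt_or_ge x 0 with hx | hx
  · omega
  have hx' : (0 : ℝ) ≤ x := by exact_mod_cast hx
  have : ((2 * x + 1 : ℤ) : ℝ) < d := by push_cast; nlinarith
  have : 2 * x + 1 < d := by exact_mod_cast this
  omega

theorem stmt11_general {n : ℕ} (α : ℝ) (hα : 2 ≤ α)
    (s : Profile n) (hstar : IsStar (NCGraph s))
    (K : Finset (Fin n)) (s' : Profile n)
    (himp : ∀ i ∈ K, cost α s' i < cost α s i)
    (i : Fin n) (hiK : i ∈ K) (hleaf : (NCGraph s).degree i = 1) :
    ((NCGraph s).degree i : ℤ) - (s i).card <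
      ((NCGraph s').degree i : ℤ) - (s' i).card ∧
    (((NCGraph s').degree i : ℤ) - (s' i).card) -
        (((NCGraph s).degree i : ℤ) - (s i).card) ≥
      ((s' i).card : ℤ) - (s i).card + 1 := by
  have hcost := himp i hiK
  have hgain := mul_card_sub_degree_lt_of_cost_lt (by linarith) (hstar.edist_le_two i) hcost
  obtain ⟨j, hadj⟩ := ((NCGraph s).degree_pos_iff_exists_adj i).1 (by omega)
  have hdeg := degree_pos_of_cost_ne_top hadj.ne hcost.ne_top
  rw [hleaf, Nat.cast_one] at hgain
  have key := two_mul_add_two_le_of_mul_add_one_lt hα (x := (s' i).card - (s i).card)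
    (d := (NCGraph s').degree i) (by positivity) (by push_cast; linarith)
  rw [hleaf]
  omega

/-- For `α ≥ 2` and a rational star profile, any leaf player in a strictly
improving coalition strictly increases her free-riding value, by at least
`|s'_i| − |s_i| + 1`. -/
theorem stmt11 {n : ℕ} (hn : 3 ≤ n) (α : ℝ) (hα : 2 ≤ α)
    (s : Profile n) (hv : Valid s) (hr : Rational s) (hstar : IsStar (NCGraph s))
    (K : Finset (Fin n)) (s' : Profile n) (hv' : Valid s')
    (hoff : ∀ i ∉ K, s' i = s i)
    (himp : ∀ i ∈ K, cost α s' i < cost α s i)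
    (i : Fin n) (hiK : i ∈ K) (hleaf : (NCGraph s).degree i = 1) :
    ((NCGraph s).degree i : ℤ) - (s i).card <
      ((NCGraph s').degree i : ℤ) - (s' i).card ∧
    (((NCGraph s').degree i : ℤ) - (s' i).card) -
        (((NCGraph s).degree i : ℤ) - (s i).card) ≥
      ((s' i).card : ℤ) - (s i).card + 1 :=
  stmt11_general α hα s hstar K s' himp i hiK hleaf
end

section
/- For α ∈ (1,2) and n = 3, a strategy profile s is a strong equilibrium of the network creation game if and only if s is rational and G(s) is the 3-star (path on 3 vertices). -/
open SimpleGraph ENNReal Finset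

/-!
With three players a connected graph has diameter at most two, so player `i` pays
`α·|s i| + 4 - deg i`; a disconnected graph costs everybody `∞`.

If `G(s)` is disconnected, all players jointly switch to a star. If some edge is bought twice,
or `G(s)` is the triangle, one buyer drops an edge: she saves `α > 1` and loses at most one
unit of distance.

Conversely, start from a rational star, which has two edges and two purchases. A coalition
member who buys more edges gains at most one unit of distance, so no improving member buys
more; since a connected graph needs two purchases, nobody buys fewer either. Hence every member
raises her degree from 1 to 2 without buying more, so some other member starts buying an edge
to her. That member also reaches degree 2, and two vertices of degree 2 need three edges.
-/

namespace SimpleGraph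

lemma connected_of_forall_adj {V : Type*} {G : SimpleGraph V} (c : V)
    (h : ∀ v, v ≠ c → G.Adj c v) : G.Connected := by
  refine (connected_iff_exists_forall_reachable _).2 ⟨c, fun v => ?_⟩
  by_cases hv : v = c
  · rw [hv]
  · exact (h v hv).reachable

variable {V : Type*} [Fintype V] {G : SimpleGraph V}

lemma Connected.dist_lt_card (hG : G.Connected) (u v : V) : G.dist u v < Fintype.card V := by
  obtain ⟨p, hp, hlen⟩ := hG.exists_path_of_dist u v
  exact hlen ▸ hp.length_lt

lemma Connected.sum_dist_add_degree [DecidableEq V] [DecidableRel G.Adj] (hG : G.Connected)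
    {u : V} (h : ∀ v, G.dist u v ≤ 2) :
    ∑ v, G.dist u v + G.degree u = 2 * (Fintype.card V - 1) := by
  have key : ∀ v, G.dist u v + (if G.Adj u v then 1 else 0) = if v = u then 0 else 2 := by
    intro v
    by_cases huv : v = u
    · subst huv; simp
    by_cases hadj : G.Adj u v
    · simp [huv, hadj, dist_eq_one_iff_adj.2 hadj]
    · have := hG.one_lt_dist_of_ne_of_not_adj (Ne.symm huv) hadj
      have := h v
      simp only [huv, hadj, if_false]
      omega
  rw [← card_neighborFinset_eq_degree, neighborFinset_eq_filter, card_filter, ← sum_add_distrib,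
    sum_congr rfl fun v _ => key v]
  simp [sum_ite, filter_ne', mul_comm]

lemma Connected.two_mul_card_sub_one_le_sum_degree [DecidableRel G.Adj] (hG : G.Connected) :
    2 * (Fintype.card V - 1) ≤ ∑ v, G.degree v := by
  have := hG.card_vert_le_card_edgeSet_add_one
  rw [Nat.card_eq_fintype_card, Nat.card_eq_fintype_card, ← edgeFinset_card] at this
  rw [sum_degrees_eq_twice_card_edges]
  omega

end SimpleGraph

lemma IsStar.connected {V : Type*} {G : SimpleGraph V} (h : IsStar G) : G.Connected := by
  obtain ⟨c, hc⟩ := h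
  exact connected_of_forall_adj c fun v hv => (hc c v).2 ⟨hv.symm, .inl rfl⟩

namespace NCGame

section ThreeVertices

lemma exists_third_of_ne {i j : Fin 3} (h : i ≠ j) :
    ∃ k, k ≠ i ∧ k ≠ j ∧ ∀ v, v = i ∨ v = j ∨ v = k := by
  revert i j; decide

variable {G : SimpleGraph (Fin 3)}

lemma isStar_of_not_adj (hG : G.Connected) {a b : Fin 3} (hab : a ≠ b) (hnadj : ¬G.Adj a b) :
    IsStar G := by
  obtain ⟨w, hw⟩ : (G.commonNeighbors a b).Nonempty := by
    by_contra h
    have hlt := hG.dist_lt_card a b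
    have h2 := two_lt_edist_iff.2 ⟨hab, hnadj, Set.not_nonempty_iff_eq_empty.1 h⟩
    rw [← (hG a b).coe_dist_eq_edist] at h2
    simp only [Fintype.card_fin] at hlt
    norm_cast at h2
    omega
  rw [mem_commonNeighbors] at hw
  obtain ⟨k, hka, hkb, hall⟩ := exists_third_of_ne hab
  obtain rfl : w = k := by
    rcases hall w with h | h | h
    exacts [absurd h hw.1.ne', absurd h hw.2.ne', h]
  have := hw.1.ne
  have := hw.2.ne
  refine ⟨w, fun x y => ?_⟩
  rcases hall x with rfl | rfl | rfl <;> rcases hall y with rfl | rfl | rfl <;>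
    simp_all [adj_comm, eq_comm]

variable [DecidableRel G.Adj]

lemma sum_degree_le_four_of_isStar (h : IsStar G) :
    ∑ v, G.degree v ≤ 4 := by
  obtain ⟨c, hc⟩ := h
  calc ∑ v, G.degree v ≤ ∑ v, (if v = c then 2 else 1) := sum_le_sum fun v _ => ?_
    _ = 4 := by fin_cases c <;> decide
  split_ifs with hv
  · exact Nat.lt_succ_iff.1 (G.degree_lt_card_verts v)
  · rw [← card_neighborFinset_eq_degree]
    refine card_le_one.2 fun a ha b hb => ?_
    simp only [mem_neighborFinset, hc, hv, false_or] at ha hb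
    exact ha.2.trans hb.2.symm

lemma eq_of_degree_eq_two (hG : G.Connected) (hsum : ∑ v, G.degree v ≤ 4) {i j : Fin 3}
    (hi : G.degree i = 2) (hj : G.degree j = 2) : i = j := by
  by_contra hij
  obtain ⟨k, hki, hkj, -⟩ := exists_third_of_ne hij
  have hsub : ∑ v ∈ {i, j, k}, G.degree v ≤ ∑ v, G.degree v := sum_le_sum_of_subset (subset_univ _)
  rw [sum_insert (by simp [hij, hki.symm]), sum_pair hkj.symm] at hsub
  have := hG.preconnected.degree_pos_of_nontrivial k
  omega

end ThreeVertices

variable {n : ℕ}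

def buyers (s : Profile n) (i : Fin n) : Finset (Fin n) := {j | i ∈ s j}

@[simp] lemma mem_buyers {s : Profile n} {i j : Fin n} : j ∈ buyers s i ↔ i ∈ s j := by
  simp [buyers]

@[simp] lemma ncGraph_adj (s : Profile n) (i j : Fin n) :
    (NCGraph s).Adj i j ↔ i ≠ j ∧ (j ∈ s i ∨ i ∈ s j) :=
  fromRel_adj _ i j

lemma valid_of_rational {s : Profile n} (hr : Rational s) : Valid s :=
  fun i hi => hr i i hi hi

lemma neighborFinset_ncGraph {s : Profile n} (hv : Valid s) (i : Fin n) :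
    (NCGraph s).neighborFinset i = s i ∪ buyers s i := by
  ext j
  simp only [mem_neighborFinset, ncGraph_adj, mem_union, mem_buyers]
  refine ⟨And.right, fun h => ⟨?_, h⟩⟩
  rintro rfl
  exact hv i (h.elim id id)

lemma degree_ncGraph_le {s : Profile n} (hv : Valid s) (i : Fin n) :
    (NCGraph s).degree i ≤ #(s i) + #(buyers s i) := by
  rw [← card_neighborFinset_eq_degree, neighborFinset_ncGraph hv]
  exact card_union_le _ _

lemma degree_ncGraph_of_rational {s : Profile n} (hr : Rational s) (i : Fin n) :
    (NCGraph s).degree i = #(s i) + #(buyers s i) := by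
  rw [← card_neighborFinset_eq_degree, neighborFinset_ncGraph (valid_of_rational hr)]
  exact card_union_of_disjoint (disjoint_left.2 fun j hj hj' => hr i j hj (mem_buyers.1 hj'))

lemma sum_card_buyers (s : Profile n) : ∑ i, #(buyers s i) = ∑ j, #(s j) := by
  simp only [buyers, card_filter]
  rw [sum_comm]
  simp

lemma sum_degree_ncGraph_le {s : Profile n} (hv : Valid s) :
    ∑ i, (NCGraph s).degree i ≤ 2 * ∑ i, #(s i) := by
  calc ∑ i, (NCGraph s).degree i ≤ ∑ i, (#(s i) + #(buyers s i)) :=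
        sum_le_sum fun i _ => degree_ncGraph_le hv i
    _ = 2 * ∑ i, #(s i) := by rw [sum_add_distrib, sum_card_buyers]; ring

lemma sum_degree_ncGraph_of_rational {s : Profile n} (hr : Rational s) :
    ∑ i, (NCGraph s).degree i = 2 * ∑ i, #(s i) := by
  simp_rw [degree_ncGraph_of_rational hr, sum_add_distrib, sum_card_buyers]
  ring

lemma exists_new_buyer_of_degree_lt {s s' : Profile n} (hr : Rational s) (hv' : Valid s')
    {i : Fin n} (hcard : #(s' i) = #(s i))
    (hdeg : (NCGraph s).degree i < (NCGraph s').degree i) : ∃ j, i ∈ s' j ∧ i ∉ s j := by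
  by_contra! h
  have : #(buyers s' i) ≤ #(buyers s i) :=
    card_le_card fun j hj => mem_buyers.2 (h j (mem_buyers.1 hj))
  have := degree_ncGraph_le hv' i
  have := degree_ncGraph_of_rational hr i
  omega

lemma dCost_eq_top_of_not_connected {s : Profile n} (h : ¬(NCGraph s).Connected) (i : Fin n) :
    dCost s i = ⊤ := by
  obtain ⟨j, hj⟩ : ∃ j, ¬(NCGraph s).Reachable i j := by
    by_contra! hreach
    exact h ((connected_iff_exists_forall_reachable _).2 ⟨i, hreach⟩)
  rw [dCost, ENNReal.sum_eq_top]
  exact ⟨j, mem_univ j, by simp [edist_eq_top_of_not_reachable hj]⟩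

lemma cost_eq_top_of_not_connected {s : Profile n} (h : ¬(NCGraph s).Connected) (α : ℝ)
    (i : Fin n) : cost α s i = ⊤ := by
  rw [cost, dCost_eq_top_of_not_connected h, add_top]

lemma cost_lt_top_of_connected {s : Profile n} (h : (NCGraph s).Connected) (α : ℝ)
    (i : Fin n) : cost α s i < ⊤ := by
  refine add_lt_top.2 ⟨mul_lt_top ofReal_lt_top (natCast_lt_top _), ?_⟩
  refine ENNReal.sum_lt_top.2 fun j _ => ENat.toENNReal_lt_top.2 ?_
  exact lt_top_iff_ne_top.2 (edist_ne_top_iff_reachable.2 (h i j))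

def starProfile (c : Fin n) : Profile n := fun i => if i = c then univ.erase c else ∅

lemma valid_starProfile (c : Fin n) : Valid (starProfile c) := by
  intro i
  by_cases h : i = c <;> simp [starProfile, h]

lemma connected_ncGraph_starProfile (c : Fin n) : (NCGraph (starProfile c)).Connected :=
  connected_of_forall_adj c fun v hv => by simp [starProfile, hv, Ne.symm hv]

lemma not_isStrongEq_of_not_connected [NeZero n] (α : ℝ) {s : Profile n}
    (h : ¬(NCGraph s).Connected) : ¬IsStrongEq α s := by
  intro hse
  obtain ⟨i, -, hi⟩ := hse univ (starProfile 0) univ_nonempty (valid_starProfile 0)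
    (fun i hi => absurd (mem_univ i) hi)
  rw [cost_eq_top_of_not_connected h, top_le_iff] at hi
  exact (cost_lt_top_of_connected (connected_ncGraph_starProfile 0) α i).ne hi

def dropEdge (s : Profile n) (i j : Fin n) : Profile n := Function.update s i ((s i).erase j)

lemma dropEdge_apply_of_ne (s : Profile n) {i k : Fin n} (j : Fin n) (hk : k ≠ i) :
    dropEdge s i j k = s k :=
  Function.update_of_ne hk _ _

lemma card_dropEdge_self_add_one {s : Profile n} {i j : Fin n} (h : j ∈ s i) :
    #(dropEdge s i j i) + 1 = #(s i) := by
  simp [dropEdge, card_erase_add_one h]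

@[simp] lemma mem_dropEdge {s : Profile n} {i j a b : Fin n} :
    b ∈ dropEdge s i j a ↔ b ∈ s a ∧ ¬(a = i ∧ b = j) := by
  by_cases ha : a = i
  · subst ha; simp [dropEdge, and_comm]
  · simp [dropEdge_apply_of_ne s j ha, ha]

lemma valid_dropEdge {s : Profile n} (hv : Valid s) (i j : Fin n) : Valid (dropEdge s i j) :=
  fun k hk => hv k (mem_dropEdge.1 hk).1

lemma ncGraph_dropEdge_le (s : Profile n) (i j : Fin n) : NCGraph (dropEdge s i j) ≤ NCGraph s := by
  intro a b
  simp only [ncGraph_adj, mem_dropEdge]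
  tauto

lemma ncGraph_dropEdge_adj {s : Profile n} {i j a b : Fin n} (h : (NCGraph s).Adj a b)
    (hab : s(a, b) ≠ s(i, j) ∨ i ∈ s j) : (NCGraph (dropEdge s i j)).Adj a b := by
  simp only [ncGraph_adj, mem_dropEdge, ne_eq, Sym2.eq_iff] at h hab ⊢
  grind

lemma ncGraph_dropEdge_of_mem {s : Profile n} {i j : Fin n} (h : i ∈ s j) :
    NCGraph (dropEdge s i j) = NCGraph s :=
  le_antisymm (ncGraph_dropEdge_le s i j) fun _ _ hab => ncGraph_dropEdge_adj hab (.inr h)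

lemma degree_ncGraph_le_degree_dropEdge_add_one (s : Profile n) (i j : Fin n) :
    (NCGraph s).degree i ≤ (NCGraph (dropEdge s i j)).degree i + 1 := by
  simp only [← card_neighborFinset_eq_degree]
  refine (card_le_card fun v hv => ?_).trans (card_insert_le j _)
  rw [mem_insert, mem_neighborFinset]
  by_cases hvj : v = j
  · exact .inl hvj
  · have hiv := (mem_neighborFinset _ _ _).1 hv
    exact .inr (ncGraph_dropEdge_adj hiv (.inl (by simp [hvj, hiv.ne.symm])))

lemma dCost_eq_of_connected {s : Profile 3} (h : (NCGraph s).Connected) (i : Fin 3) :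
    dCost s i = ((4 - (NCGraph s).degree i : ℕ) : ℝ≥0∞) := by
  have hsum := h.sum_dist_add_degree (u := i) fun v => Nat.lt_succ_iff.1 (h.dist_lt_card i v)
  simp only [Fintype.card_fin] at hsum
  rw [dCost, show 4 - (NCGraph s).degree i = ∑ v, (NCGraph s).dist i v by omega, Nat.cast_sum]
  simp_rw [← (h i _).coe_dist_eq_edist, ENat.toENNReal_coe]

lemma cost_eq_ofReal_of_connected {α : ℝ} (hα : 0 ≤ α) {s : Profile 3}
    (h : (NCGraph s).Connected) (i : Fin 3) :
    cost α s i = ENNReal.ofReal (α * #(s i) + 4 - (NCGraph s).degree i) := by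
  have hdeg : (NCGraph s).degree i ≤ 4 := ((NCGraph s).degree_lt_card_verts i).le.trans (by simp)
  have hdeg' : ((NCGraph s).degree i : ℝ) ≤ 4 := by exact_mod_cast hdeg
  rw [cost, dCost_eq_of_connected h, add_sub_assoc, ENNReal.ofReal_add (by positivity)
    (by linarith), ENNReal.ofReal_mul hα, ofReal_natCast, ← ofReal_natCast]
  push_cast [hdeg]
  rfl

lemma cost_lt_cost_iff {α : ℝ} (hα : 0 ≤ α) {s s' : Profile 3} (h : (NCGraph s).Connected)
    (h' : (NCGraph s').Connected) (i : Fin 3) :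
    cost α s' i < cost α s i ↔
      α * #(s' i) - (NCGraph s').degree i < α * #(s i) - (NCGraph s).degree i := by
  have hdeg : ((NCGraph s).degree i : ℝ) < 3 := by exact_mod_cast (NCGraph s).degree_lt_card_verts i
  rw [cost_eq_ofReal_of_connected hα h, cost_eq_ofReal_of_connected hα h',
    ENNReal.ofReal_lt_ofReal_iff (by have := mul_nonneg hα (#(s i)).cast_nonneg; linarith)]
  constructor <;> intro <;> linarith

lemma cost_dropEdge_lt {α : ℝ} (hα : 1 < α) {s : Profile 3} {i j : Fin 3} (hj : j ∈ s i)
    (h : (NCGraph (dropEdge s i j)).Connected) : cost α (dropEdge s i j) i < cost α s i := by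
  have hG : (NCGraph s).Connected := h.mono (ncGraph_dropEdge_le s i j)
  have hcard : (#(dropEdge s i j i) : ℝ) + 1 = #(s i) := by
    exact_mod_cast card_dropEdge_self_add_one hj
  have hdeg : ((NCGraph s).degree i : ℝ) ≤ (NCGraph (dropEdge s i j)).degree i + 1 := by
    exact_mod_cast degree_ncGraph_le_degree_dropEdge_add_one s i j
  rw [cost_lt_cost_iff (by linarith) hG h, ← hcard]
  linarith

lemma not_isStrongEq_of_connected_dropEdge {α : ℝ} (hα : 1 < α) {s : Profile 3} (hv : Valid s)
    {i j : Fin 3} (hj : j ∈ s i) (h : (NCGraph (dropEdge s i j)).Connected) :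
    ¬IsStrongEq α s := by
  intro hse
  obtain ⟨k, hk, hle⟩ := hse {i} (dropEdge s i j) (singleton_nonempty i) (valid_dropEdge hv i j)
    fun k hk => dropEdge_apply_of_ne s j (notMem_singleton.1 hk)
  rw [mem_singleton.1 hk] at hle
  exact (cost_dropEdge_lt hα hj h).not_ge hle

lemma connected_ncGraph_dropEdge_of_forall_adj {s : Profile 3}
    (hcomplete : ∀ a b, a ≠ b → (NCGraph s).Adj a b) {i j : Fin 3} (hij : i ≠ j) :
    (NCGraph (dropEdge s i j)).Connected := by
  obtain ⟨k, hki, hkj, -⟩ := exists_third_of_ne hij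
  exact connected_of_forall_adj k fun v hv =>
    ncGraph_dropEdge_adj (hcomplete k v hv.symm) (.inl (by simp [hki, hkj]))

theorem rational_and_isStar_of_isStrongEq {α : ℝ} (hα : 1 < α) {s : Profile 3} (hv : Valid s)
    (hse : IsStrongEq α s) : Rational s ∧ IsStar (NCGraph s) := by
  have hG : (NCGraph s).Connected := by_contra fun h => not_isStrongEq_of_not_connected α h hse
  refine ⟨fun i j hj hi => ?_, by_contra fun hns => ?_⟩
  · exact not_isStrongEq_of_connected_dropEdge hα hv hj (ncGraph_dropEdge_of_mem hi ▸ hG) hse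
  have hcomplete : ∀ a b, a ≠ b → (NCGraph s).Adj a b := fun a b hab =>
    by_contra fun h => hns (isStar_of_not_adj hG hab h)
  obtain ⟨i, j, hij, hj⟩ : ∃ i j : Fin 3, i ≠ j ∧ j ∈ s i := by
    rcases ((ncGraph_adj s 0 1).1 (hcomplete 0 1 (by decide))).2 with h | h
    exacts [⟨0, 1, by decide, h⟩, ⟨1, 0, by decide, h⟩]
  exact not_isStrongEq_of_connected_dropEdge hα hv hj
    (connected_ncGraph_dropEdge_of_forall_adj hcomplete hij) hse

lemma card_le_card_of_cost_lt {α : ℝ} (hα : 1 < α) {s s' : Profile 3}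
    (hG : (NCGraph s).Connected) (hG' : (NCGraph s').Connected) {i : Fin 3}
    (hdeg : 0 < (NCGraph s).degree i) (h : cost α s' i < cost α s i) : #(s' i) ≤ #(s i) := by
  rw [cost_lt_cost_iff (by linarith) hG hG'] at h
  by_contra! hlt
  have hlt' : (#(s i) : ℝ) + 1 ≤ #(s' i) := by exact_mod_cast hlt
  have h1 : (1 : ℝ) ≤ (NCGraph s).degree i := by exact_mod_cast hdeg
  have h2 : ((NCGraph s').degree i : ℝ) ≤ 2 := by
    exact_mod_cast Nat.lt_succ_iff.1 ((NCGraph s').degree_lt_card_verts i)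
  have := mul_le_mul_of_nonneg_left hlt' (by linarith : (0 : ℝ) ≤ α)
  linarith

lemma degree_lt_degree_of_cost_lt {α : ℝ} (hα : 0 ≤ α) {s s' : Profile 3}
    (hG : (NCGraph s).Connected) (hG' : (NCGraph s').Connected) {i : Fin 3}
    (hcard : #(s' i) = #(s i)) (h : cost α s' i < cost α s i) :
    (NCGraph s).degree i < (NCGraph s').degree i := by
  rw [cost_lt_cost_iff hα hG hG', hcard, sub_lt_sub_iff_left] at h
  exact_mod_cast h

lemma card_eq_of_forall_cost_lt {α : ℝ} (hα : 1 < α) {s s' : Profile 3} (hr : Rational s)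
    (hstar : IsStar (NCGraph s)) (hv' : Valid s') (hG' : (NCGraph s').Connected)
    {K : Finset (Fin 3)} (hout : ∀ i ∉ K, s' i = s i) (himp : ∀ i ∈ K, cost α s' i < cost α s i)
    (i : Fin 3) : #(s' i) = #(s i) := by
  have hG := hstar.connected
  have hle : ∀ i ∈ univ, #(s' i) ≤ #(s i) := fun i _ => by
    by_cases hi : i ∈ K
    · exact card_le_card_of_cost_lt hα hG hG' (hG.preconnected.degree_pos_of_nontrivial i)
        (himp i hi)
    · rw [hout i hi]
  have hsum := sum_degree_le_four_of_isStar hstar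
  rw [sum_degree_ncGraph_of_rational hr] at hsum
  have hsum' := hG'.two_mul_card_sub_one_le_sum_degree
  rw [Fintype.card_fin] at hsum'
  have := sum_degree_ncGraph_le hv'
  exact (sum_eq_sum_iff_of_le hle).1 (le_antisymm (sum_le_sum hle) (by omega)) i (mem_univ i)

theorem isStrongEq_of_rational_of_isStar {α : ℝ} (hα : 1 < α) {s : Profile 3}
    (hr : Rational s) (hstar : IsStar (NCGraph s)) : IsStrongEq α s := by
  intro K s' hK hv' hout
  by_contra! himp
  obtain ⟨i, hi⟩ := hK
  have hG := hstar.connected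
  have hG' : (NCGraph s').Connected := by
    by_contra h
    exact not_top_lt (cost_eq_top_of_not_connected h α i ▸ himp i hi)
  have hcard := card_eq_of_forall_cost_lt hα hr hstar hv' hG' hout himp
  have hdeg_lt j (hj : j ∈ K) := degree_lt_degree_of_cost_lt (by linarith) hG hG' (hcard j) (himp j hj)
  have hdeg_two : ∀ j ∈ K, (NCGraph s').degree j = 2 := fun j hj => by
    have := hdeg_lt j hj
    have := (NCGraph s').degree_lt_card_verts j
    have := hG.preconnected.degree_pos_of_nontrivial j
    simp only [Fintype.card_fin] at *
    omega
  obtain ⟨j, hj', hj⟩ := exists_new_buyer_of_degree_lt hr hv' (hcard i) (hdeg_lt i hi)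
  have hjK : j ∈ K := by_contra fun hjK => hj (hout j hjK ▸ hj')
  have hsum : ∑ v, (NCGraph s').degree v ≤ 4 := by
    have := sum_degree_le_four_of_isStar hstar
    rw [sum_degree_ncGraph_of_rational hr, ← sum_congr rfl fun v _ => hcard v] at this
    exact (sum_degree_ncGraph_le hv').trans this
  obtain rfl := eq_of_degree_eq_two hG' hsum (hdeg_two j hjK) (hdeg_two i hi)
  exact hv' j hj'

end NCGame

theorem stmt18_general (α : ℝ) (hα1 : 1 < α)
    (s : Profile 3) (hv : Valid s) :
    IsStrongEq α s ↔ Rational s ∧ IsStar (NCGraph s) :=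
  ⟨NCGame.rational_and_isStar_of_isStrongEq hα1 hv,
    fun ⟨hr, hstar⟩ => NCGame.isStrongEq_of_rational_of_isStar hα1 hr hstar⟩

/-- For `α ∈ (1,2)` and `n = 3`: strong equilibria are exactly the rational
profiles forming the `3`-star. -/
theorem stmt18 (α : ℝ) (hα1 : 1 < α) (hα2 : α < 2)
    (s : Profile 3) (hv : Valid s) :
    IsStrongEq α s ↔ Rational s ∧ IsStar (NCGraph s) :=
  stmt18_general α hα1 s hv
end
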